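/- For nonnegative integer n and parameters α, β > -1, the Jacobi polynomial P_n^{(α,β)} satisfies the differential equation (1-x²)·y'' + [β - α - (α+β+2)·x]·y' = -n(n+α+β+1)·y, where y = P_n^{(α,β)}. -/

import Mathlib

noncomputable section
open Real Finset MeasureTheory

/-- The Jacobi polynomial `P_n^{(α,β)}`, via its explicit representation. -/
def jacobiP (α β : ℝ) (n : ℕ) (x : ℝ) : ℝ :=
  Real.Gamma (α + n + 1) / (n.factorial * Real.Gamma (α + β + n + 1)) *
    ∑ s ∈ Finset.range (n + 1),
      (n.choose s : ℝ) * (Real.Gamma (α + β + n + s + 1) / Real.Gamma (α + s + 1)) *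
        ((x - 1) / 2) ^ s

/-!
In the variable `u = (x - 1) / 2` Jacobi's equation becomes the hypergeometric equation
`u(u+1)y'' + (c + (a+b+1)u)y' + ab y = 0` with `a = -n`, `b = n + α + β + 1`, `c = α + 1`.
On `u^s` its operator acts as `(s+a)(s+b)u^s + s(s-1+c)u^(s-1)`, so `∑ d_s u^s` is a solution
as soon as `(s+a)(s+b)d_s + (s+1)(s+c)d_(s+1) = 0`; since `a = -n`, the sum may stop at `s = n`.
The coefficients of `P_n^{(α,β)}` satisfy this two-term recurrence by `Γ(t+1) = tΓ(t)` and
`C(n,s+1)(s+1) = C(n,s)(n-s)`.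
-/

open Polynomial

theorem Finset.sum_range_succ_mul_pow_add_mul_pow_pred {R : Type*} [CommSemiring R]
    (A B : ℕ → R) (u : R) (n : ℕ) (hB : B 0 = 0) :
    ∑ s ∈ range (n + 1), (A s * u ^ s + B s * u ^ (s - 1))
      = ∑ s ∈ range n, (A s + B (s + 1)) * u ^ s + A n * u ^ n := by
  rw [sum_add_distrib, sum_range_succ, sum_range_succ' (fun s => B s * u ^ (s - 1)), hB]
  simp only [add_mul, sum_add_distrib, add_tsub_cancel_right, zero_mul, add_zero]
  ring

theorem Polynomial.deriv_eval_sub_div {𝕜 : Type*} [NontriviallyNormedField 𝕜] (p : 𝕜[X])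
    (c d : 𝕜) :
    deriv (fun x => p.eval ((x - c) / d)) = fun x => (derivative p).eval ((x - c) / d) / d := by
  funext x
  have h := (p.hasDerivAt ((x - c) / d)).comp x (((hasDerivAt_id x).sub_const c).div_const d)
  exact h.deriv.trans (by simp [div_eq_mul_inv])

section Hypergeometric

variable {R : Type*} [CommRing R]

/-- Minus the hypergeometric operator `z(1-z)D² + (c-(a+b+1)z)D - ab`, written in `u = -z`. -/
def hypergeometricOp (a b c : R) : R[X] →ₗ[R] R[X] :=
  LinearMap.mulLeft R (X * (X + 1)) ∘ₗ derivative ∘ₗ derivative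
    + LinearMap.mulLeft R (C c + C (a + b + 1) * X) ∘ₗ derivative + (a * b) • LinearMap.id

theorem hypergeometricOp_apply (a b c : R) (p : R[X]) :
    hypergeometricOp a b c p = X * (X + 1) * derivative (derivative p)
      + (C c + C (a + b + 1) * X) * derivative p + C (a * b) * p := by
  simp [hypergeometricOp, smul_eq_C_mul, mul_assoc]

theorem hypergeometricOp_C_mul_X_pow (a b c d : R) (s : ℕ) :
    hypergeometricOp a b c (C d * X ^ s)
      = C ((s + a) * (s + b) * d) * X ^ s + C (s * (s - 1 + c) * d) * X ^ (s - 1) := by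
  rw [hypergeometricOp_apply, derivative_C_mul_X_pow, derivative_C_mul_X_pow]
  rcases s with _ | _ | s <;>
    simp only [map_mul, map_add, map_sub, map_natCast, map_one, Nat.add_sub_cancel, Nat.cast_add,
      Nat.cast_one] <;>
    ring

theorem hypergeometricOp_eq_zero {a b c : R} {d : ℕ → R} {n : ℕ}
    (hrec : ∀ s < n, (s + a) * (s + b) * d s + (s + 1) * (s + c) * d (s + 1) = 0)
    (htop : (n + a) * (n + b) * d n = 0) :
    hypergeometricOp a b c (∑ s ∈ range (n + 1), C (d s) * X ^ s) = 0 := by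
  rw [map_sum]
  simp only [hypergeometricOp_C_mul_X_pow]
  rw [sum_range_succ_mul_pow_add_mul_pow_pred _ (fun s => C (s * (s - 1 + c) * d s)) _ _
    (by simp)]
  rw [sum_eq_zero fun s hs => ?_, htop, map_zero, zero_mul, zero_add]
  rw [← map_add, Nat.cast_succ, add_sub_cancel_right, hrec s (mem_range.mp hs), map_zero,
    zero_mul]

end Hypergeometric

def jacobiCoeff (α β : ℝ) (n s : ℕ) : ℝ :=
  Real.Gamma (α + n + 1) / (n.factorial * Real.Gamma (α + β + n + 1)) *
    ((n.choose s : ℝ) * (Real.Gamma (α + β + n + s + 1) / Real.Gamma (α + s + 1)))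

/-- `P_n^{(α,β)}(2u + 1)` as a polynomial in `u`. -/
def jacobiPolyU (α β : ℝ) (n : ℕ) : ℝ[X] :=
  ∑ s ∈ range (n + 1), C (jacobiCoeff α β n s) * X ^ s

theorem jacobiP_eq_eval_jacobiPolyU (α β : ℝ) (n : ℕ) :
    jacobiP α β n = fun x => (jacobiPolyU α β n).eval ((x - 1) / 2) := by
  funext x
  simp [jacobiP, jacobiPolyU, jacobiCoeff, eval_finsetSum, mul_sum, mul_assoc]

theorem jacobiCoeff_succ {α β : ℝ} (hα : -1 < α) (hβ : -1 < β) {n s : ℕ} (hs : s < n) :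
    (s + 1) * (s + α + 1) * jacobiCoeff α β n (s + 1)
      = (n - s) * (n + s + α + β + 1) * jacobiCoeff α β n s := by
  have hΓ₁ : α + s + 1 ≠ 0 := by linarith
  have hΓ₂ : α + β + n + s + 1 ≠ 0 := by
    have : (1 : ℝ) ≤ n := by exact_mod_cast hs.pos
    linarith
  have hΓ : Real.Gamma (α + s + 1) ≠ 0 := (Real.Gamma_pos_of_pos (by linarith)).ne'
  have hchoose : (n.choose (s + 1) : ℝ) * (s + 1) = n.choose s * (n - s) := by
    rw [← Nat.cast_sub hs.le]; exact_mod_cast Nat.choose_succ_right_eq n s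
  simp only [jacobiCoeff, Nat.cast_succ, ← add_assoc, Real.Gamma_add_one hΓ₁,
    Real.Gamma_add_one hΓ₂]
  set K := Real.Gamma (α + n + 1) / (n.factorial * Real.Gamma (α + β + n + 1))
  field_simp
  linear_combination
    (α + s + 1) * (α + β + n + s + 1) * K * Real.Gamma (α + β + n + s + 1) * hchoose

theorem hypergeometricOp_jacobiPolyU {α β : ℝ} (hα : -1 < α) (hβ : -1 < β) (n : ℕ) :
    hypergeometricOp (-n : ℝ) (n + α + β + 1) (α + 1) (jacobiPolyU α β n) = 0 :=
  hypergeometricOp_eq_zero (fun s hs => by linear_combination jacobiCoeff_succ hα hβ hs) (by ring)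

/-- The Jacobi differential equation
`(1-x²)y'' + [β-α-(α+β+2)x]y' = -n(n+α+β+1)y` for `y = P_n^{(α,β)}`. -/
theorem jacobi_differential_equation (n : ℕ) (α β : ℝ) (hα : -1 < α) (hβ : -1 < β) (x : ℝ) :
    (1 - x ^ 2) * deriv (deriv (jacobiP α β n)) x
        + (β - α - (α + β + 2) * x) * deriv (jacobiP α β n) x
      = -(n * (n + α + β + 1)) * jacobiP α β n x := by
  have hode := congrArg (eval ((x - 1) / 2)) (hypergeometricOp_jacobiPolyU hα hβ n)
  simp only [hypergeometricOp_apply, eval_add, eval_mul, eval_X, eval_C, eval_one, eval_zero]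
    at hode
  rw [jacobiP_eq_eval_jacobiPolyU, deriv_eval_sub_div, deriv_div_const, deriv_eval_sub_div]
  linear_combination -hode
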